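/- arXiv:2510.06585 — 3 statements merged into one kernel-verified Lean document; each statement's English description precedes it below -/
import Mathlib

section
/- Let 𝔼 = ⟨E, ≤, #⟩ be a prime event structure. The configuration structure C(𝔼) = ⟨E, Conf(𝔼)⟩ whose configurations are the configurations of 𝔼 is stable: it is rooted, connected, closed under bounded unions, closed under intersections, and coherent. (For connectedness, restrict to finite configurations: every nonempty finite configuration x ∈ Conf(𝔼) contains an event a with x \ {a} ∈ Conf(𝔼).) -/
/-- A configuration structure over `E` is a set `X` of subsets of `E` (its configurations).
    It is rooted when `∅ ∈ X`. -/
def Rooted {E : Type*} (X : Set (Set E)) : Prop := ∅ ∈ X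

/-- Connectedness (restricted to finite configurations). -/
def ConnectedCS {E : Type*} (X : Set (Set E)) : Prop :=
  ∀ x ∈ X, x.Finite → x ≠ ∅ → ∃ a ∈ x, x \ {a} ∈ X

/-- Closure under bounded unions. -/
def ClosedBU {E : Type*} (X : Set (Set E)) : Prop :=
  ∀ x ∈ X, ∀ y ∈ X, ∀ z ∈ X, x ∪ y ⊆ z → x ∪ y ∈ X

/-- Closure under (binary) intersections. -/
def ClosedInter {E : Type*} (X : Set (Set E)) : Prop :=
  ∀ x ∈ X, ∀ y ∈ X, x ∩ y ∈ X

/-- Coherence of a configuration structure. -/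
def CoherentCS {E : Type*} (X : Set (Set E)) : Prop :=
  ∀ x ∈ X, ∀ y ∈ X, ∀ z ∈ X,
    (∃ z' ∈ X, x ∪ y ⊆ z') → (∃ z'' ∈ X, y ∪ z ⊆ z'') → (∃ z''' ∈ X, x ∪ z ⊆ z''') →
    x ∪ y ∪ z ∈ X

/-- Stability of a configuration structure. -/
def StableCS {E : Type*} (X : Set (Set E)) : Prop :=
  Rooted X ∧ ConnectedCS X ∧ ClosedBU X ∧ ClosedInter X ∧ CoherentCS X

/-- The residual `x·C`: configurations `y \ x` for `y ∈ X` with `x ⊆ y`. -/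
def res {E : Type*} (x : Set E) (X : Set (Set E)) : Set (Set E) :=
  {z | ∃ y ∈ X, x ⊆ y ∧ z = y \ x}

/-- The symmetric residual `x⊙C`: configurations `y ∆ x` for `y ∈ X`. -/
def symres {E : Type*} (x : Set E) (X : Set (Set E)) : Set (Set E) :=
  {z | ∃ y ∈ X, z = symmDiff y x}

/-- `s` is the least upper bound of `Y` in the partial order `(X, ⊆)`. -/
def IsLubIn {E : Type*} (X Y : Set (Set E)) (s : Set E) : Prop :=
  s ∈ X ∧ (∀ y ∈ Y, y ⊆ s) ∧ ∀ t ∈ X, (∀ y ∈ Y, y ⊆ t) → s ⊆ t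

/-- `Y` is consistent in `(X, ⊆)`: it has a least upper bound in `X`. -/
def ConsistentIn {E : Type*} (X Y : Set (Set E)) : Prop := ∃ s, IsLubIn X Y s

/-- `Y` is pairwise consistent in `(X, ⊆)`. -/
def PairwiseConsistentIn {E : Type*} (X Y : Set (Set E)) : Prop :=
  Y.Nonempty ∧ ∀ a ∈ Y, ∀ b ∈ Y, a ≠ b → ConsistentIn X {a, b}

/-- `Y` is directed in `(X, ⊆)`: nonempty and its lub exists and belongs to `Y`. -/
def DirectedIn {E : Type*} (X Y : Set (Set E)) : Prop :=
  Y.Nonempty ∧ ∃ s ∈ Y, IsLubIn X Y s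

/-- Two configurations are compatible when `{u, v}` has a least upper bound in `(X, ⊆)`. -/
def Compatible {E : Type*} (X : Set (Set E)) (u v : Set E) : Prop :=
  ConsistentIn X {u, v}

/-- Orthogonality: compatible and inclusion-incomparable. -/
def Orthogonal {E : Type*} (X : Set (Set E)) (u v : Set E) : Prop :=
  Compatible X u v ∧ ¬ u ⊆ v ∧ ¬ v ⊆ u

/-- `x` is a compact element of `(X, ⊆)`. -/
def CompactIn {E : Type*} (X : Set (Set E)) (x : Set E) : Prop :=
  x ∈ X ∧ ∀ Y ⊆ X, DirectedIn X Y → ∀ s, IsLubIn X Y s → x ⊆ s → ∃ y ∈ Y, x ⊆ y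

/-- `p` is a complete prime of `(X, ⊆)`. -/
def CompletePrimeIn {E : Type*} (X : Set (Set E)) (p : Set E) : Prop :=
  p ∈ X ∧ ∀ Y ⊆ X, PairwiseConsistentIn X Y → ∀ s, IsLubIn X Y s → p ⊆ s → ∃ y ∈ Y, p ⊆ y

/-- `y` is an immediate predecessor of `p` in `(X, ⊆)`:
    a maximal element of `{z ∈ X | z ⊊ p}`. -/
def IsMaxPred {E : Type*} (X : Set (Set E)) (p y : Set E) : Prop :=
  y ∈ X ∧ y ⊂ p ∧ ∀ z ∈ X, z ⊂ p → y ⊆ z → z = y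

/-- The complete prime `p` introduces event `a` in `C = ⟨E, X⟩`:
    `p \ pred(p) = {a}` for an immediate predecessor `pred(p)` of `p`
    (i.e. the derivative `δ_C(p)` of `p` is `a`). -/
def IntroducesIn {E : Type*} (X : Set (Set E)) (p : Set E) (a : E) : Prop :=
  CompletePrimeIn X p ∧ ∃ y, IsMaxPred X p y ∧ p \ y = {a}

/-- `p'` is the image of `p` under the residuation map `σ : Pr(C) → Pr(C')`,
    i.e. `p` and `p'` introduce the same event (`δ_{C'}(p') = δ_C(p)`). -/
def SameIntro {E : Type*} (X X' : Set (Set E)) (p p' : Set E) : Prop :=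
  ∃ a, IntroducesIn X p a ∧ IntroducesIn X' p' a

/-- `↓x_C`: the complete primes of `C` included in `x`. -/
def downPr {E : Type*} (X : Set (Set E)) (x : Set E) : Set (Set E) :=
  {p | CompletePrimeIn X p ∧ p ⊆ x}

/-- Causality relation of the switch `↓x_C ⊙ E(C)`. -/
def ltSwitch {E : Type*} (X : Set (Set E)) (x : Set E) (p q : Set E) : Prop :=
  (p ⊆ q ∧ p ∉ downPr X x ∧ q ∉ downPr X x) ∨
  (q ⊆ p ∧ p ∈ downPr X x ∧ q ∈ downPr X x) ∨
  (¬ Compatible X p q ∧ p ∈ downPr X x)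

/-- Conflict relation of the switch `↓x_C ⊙ E(C)`. -/
def cfSwitch {E : Type*} (X : Set (Set E)) (x : Set E) (p q : Set E) : Prop :=
  (¬ Compatible X p q ∧ p ∉ downPr X x ∧ q ∉ downPr X x) ∨
  (p ⊆ q ∧ p ∈ downPr X x ∧ q ∉ downPr X x)

theorem Set.Finite.exists_rel_maximal {E : Type*} (le : E → E → Prop)
    (le_refl : ∀ e, le e e) (le_antisymm : ∀ e f, le e f → le f e → e = f)
    (le_trans : ∀ e f g, le e f → le f g → le e g) {s : Set E} (hs : s.Finite)
    (hne : s.Nonempty) : ∃ a ∈ s, ∀ b ∈ s, le a b → a = b := by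
  let _ : PartialOrder E := { le, le_refl, le_trans, le_antisymm }
  obtain ⟨a, ha⟩ := hs.exists_maximal hne
  exact ⟨a, ha.prop, fun b hb hab => ha.eq_of_le hb hab⟩

namespace PrimeEventStructure

variable {E : Type*}

def ConflictFree (cf : E → E → Prop) (x : Set E) : Prop :=
  ∀ a ∈ x, ∀ b ∈ x, ¬ cf a b

def DownClosed (le : E → E → Prop) (x : Set E) : Prop :=
  ∀ a ∈ x, ∀ b, le b a → b ∈ x

def conf (le cf : E → E → Prop) : Set (Set E) :=
  {x | ConflictFree cf x ∧ DownClosed le x}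

variable {le cf : E → E → Prop} {x y z : Set E}

theorem ConflictFree.mono (hy : ConflictFree cf y) (hxy : x ⊆ y) : ConflictFree cf x :=
  fun a ha b hb => hy a (hxy ha) b (hxy hb)

theorem ConflictFree.union_union (hxy : ConflictFree cf (x ∪ y))
    (hyz : ConflictFree cf (y ∪ z)) (hxz : ConflictFree cf (x ∪ z)) :
    ConflictFree cf (x ∪ y ∪ z) := by
  intro a ha b hb
  have hpair : (a ∈ x ∪ y ∧ b ∈ x ∪ y) ∨ (a ∈ y ∪ z ∧ b ∈ y ∪ z) ∨
      (a ∈ x ∪ z ∧ b ∈ x ∪ z) := by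
    simp only [Set.mem_union] at ha hb ⊢
    tauto
  rcases hpair with ⟨ha, hb⟩ | ⟨ha, hb⟩ | ⟨ha, hb⟩
  exacts [hxy a ha b hb, hyz a ha b hb, hxz a ha b hb]

theorem DownClosed.union (hx : DownClosed le x) (hy : DownClosed le y) :
    DownClosed le (x ∪ y) := by
  rintro a (ha | ha) b hba
  exacts [Or.inl (hx a ha b hba), Or.inr (hy a ha b hba)]

theorem DownClosed.inter (hx : DownClosed le x) (hy : DownClosed le y) :
    DownClosed le (x ∩ y) :=
  fun a ha b hba => ⟨hx a ha.1 b hba, hy a ha.2 b hba⟩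

theorem DownClosed.diff_singleton {a : E} (hx : DownClosed le x)
    (hmax : ∀ b ∈ x, le a b → a = b) : DownClosed le (x \ {a}) := by
  rintro b ⟨hbx, hba⟩ c hcb
  refine ⟨hx b hbx c hcb, ?_⟩
  rintro rfl
  exact hba (hmax b hbx hcb).symm

theorem rooted_conf : Rooted (conf le cf) :=
  ⟨fun _ ha => ha.elim, fun _ ha => ha.elim⟩

theorem connectedCS_conf (le_refl : ∀ e, le e e)
    (le_antisymm : ∀ e f, le e f → le f e → e = f)
    (le_trans : ∀ e f g, le e f → le f g → le e g) : ConnectedCS (conf le cf) := by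
  rintro x ⟨hcf, hdc⟩ hfin hne
  obtain ⟨a, hax, hmax⟩ :=
    hfin.exists_rel_maximal le le_refl le_antisymm le_trans (Set.nonempty_iff_ne_empty.2 hne)
  exact ⟨a, hax, hcf.mono Set.sdiff_subset, hdc.diff_singleton hmax⟩

theorem closedBU_conf : ClosedBU (conf le cf) :=
  fun _ hx _ hy _ hz hsub => ⟨hz.1.mono hsub, hx.2.union hy.2⟩

theorem closedInter_conf : ClosedInter (conf le cf) :=
  fun _ hx _ hy => ⟨hx.1.mono Set.inter_subset_left, hx.2.inter hy.2⟩

theorem coherentCS_conf : CoherentCS (conf le cf) := by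
  rintro x hx y hy z hz ⟨u, hu, hxy⟩ ⟨v, hv, hyz⟩ ⟨w, hw, hxz⟩
  exact ⟨ConflictFree.union_union (hu.1.mono hxy) (hv.1.mono hyz) (hw.1.mono hxz),
    (hx.2.union hy.2).union hz.2⟩

end PrimeEventStructure

theorem conf_of_pes_is_stable_general {E : Type*}
    (le : E → E → Prop) (cf : E → E → Prop)
    (le_refl : ∀ e, le e e)
    (le_antisymm : ∀ e f, le e f → le f e → e = f)
    (le_trans : ∀ e f g, le e f → le f g → le e g) :
    StableCS {x : Set E | (∀ a ∈ x, ∀ b ∈ x, ¬ cf a b) ∧ ∀ a ∈ x, ∀ b, le b a → b ∈ x} :=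
  open PrimeEventStructure in
  ⟨rooted_conf, connectedCS_conf le_refl le_antisymm le_trans, closedBU_conf, closedInter_conf,
    coherentCS_conf⟩

/-- The configurations of a prime event structure (conflict-free,
    downward-closed sets of events) form a stable configuration structure. -/
theorem conf_of_pes_is_stable {E : Type*} [Countable E]
    (le : E → E → Prop) (cf : E → E → Prop)
    (le_refl : ∀ e, le e e)
    (le_antisymm : ∀ e f, le e f → le f e → e = f)
    (le_trans : ∀ e f g, le e f → le f g → le e g)
    (cf_irrefl : ∀ e, ¬ cf e e)
    (cf_symm : ∀ e f, cf e f → cf f e)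
    (cf_hered : ∀ e e' e'', cf e e' → le e' e'' → cf e e'') :
    StableCS {x : Set E | (∀ a ∈ x, ∀ b ∈ x, ¬ cf a b) ∧ ∀ a ∈ x, ∀ b, le b a → b ∈ x} :=
  conf_of_pes_is_stable_general le cf le_refl le_antisymm le_trans
end

section
/- Let C = ⟨E, X⟩ be a stable configuration structure over a countable set E. Then E(C) := ⟨Pr(C), <, #⟩, where for complete primes p, q one sets p < q iff p ⊆ q and p # q iff {p, q} has no least upper bound in (X, ⊆), is a prime event structure: < is a partial order, # is irreflexive and symmetric, and # satisfies conflict heredity with respect to <. -/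
/-- For a stable `C`, `E(C) = ⟨Pr(C), <, #⟩` with `p < q` iff
    `p ⊆ q` and `p # q` iff `{p, q}` has no lub in `(X, ⊆)`, is a prime event
    structure. -/
theorem es_of_stable_is_pes {E : Type*} [Countable E] (X : Set (Set E))
    (hX : StableCS X) :
    (∀ p, CompletePrimeIn X p → p ⊆ p) ∧
    (∀ p q, CompletePrimeIn X p → CompletePrimeIn X q → p ⊆ q → q ⊆ p → p = q) ∧
    (∀ p q r, CompletePrimeIn X p → CompletePrimeIn X q → CompletePrimeIn X r →
      p ⊆ q → q ⊆ r → p ⊆ r) ∧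
    (∀ p, CompletePrimeIn X p → ¬ ¬ Compatible X p p) ∧
    (∀ p q, CompletePrimeIn X p → CompletePrimeIn X q →
      ¬ Compatible X p q → ¬ Compatible X q p) ∧
    (∀ p q r, CompletePrimeIn X p → CompletePrimeIn X q → CompletePrimeIn X r →
      ¬ Compatible X p q → q ⊆ r → ¬ Compatible X p r) := by
  obtain ⟨_, _, hBU, _, _⟩ := hX
  refine ⟨fun p _ => subset_rfl,
    fun p q _ _ h1 h2 => subset_antisymm h1 h2,
    fun p q r _ _ _ h1 h2 => h1.trans h2,
    fun p hp hn => hn ⟨p, hp.1, fun y hy => by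
      rcases hy with h | h <;> simp_all, fun t _ ht => ht p (by simp)⟩,
    fun p q _ _ hn hc => hn (by rwa [Compatible, ConsistentIn, Set.pair_comm] at hc),
    fun p q r hp hq hr hn hqr hc => ?_⟩
  obtain ⟨s, hsX, hub, _⟩ := hc
  have hps : p ⊆ s := hub p (by simp)
  have hrs : r ⊆ s := hub r (by simp)
  have hpq : p ∪ q ⊆ s := Set.union_subset hps (hqr.trans hrs)
  have hmem : p ∪ q ∈ X := hBU p hp.1 q hq.1 s hsX hpq
  exact hn ⟨p ∪ q, hmem, fun y hy => by
    rcases hy with h | h <;> simp_all,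
    fun t _ ht => Set.union_subset (ht p (by simp)) (ht q (by simp))⟩
end

section
/- Effects of residuation on orthogonality: let C = ⟨E, X⟩ be a stable configuration structure over a countable set E, x ∈ X a finite configuration, and σ_x : Pr(C) → Pr(x⊙C) the residuation map. For all distinct complete primes p, q ∈ Pr(C), if p and q are orthogonal in C (compatible and inclusion-incomparable), then σ_x(p) and σ_x(q) are orthogonal in x⊙C. -/
lemma mem_of_introduces {E : Type*} {X : Set (Set E)} {p : Set E} {a : E}
    (h : IntroducesIn X p a) : a ∈ p := by
  obtain ⟨_, y, _, hd⟩ := h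
  have ha : a ∈ ({a} : Set E) := rfl
  rw [← hd] at ha
  exact ha.1

/-- In an intersection-closed structure, a complete prime introducing `a`
    is contained in every configuration containing `a`. -/
lemma prime_subset_of_mem {E : Type*} {X : Set (Set E)} (hInt : ClosedInter X)
    {p : Set E} {a : E} (hpa : IntroducesIn X p a) :
    ∀ z ∈ X, a ∈ z → p ⊆ z := by
  obtain ⟨⟨hpX, hprime⟩, y0, ⟨hy0X, hy0p, _⟩, hdiff⟩ := hpa
  intro z hz haz
  have hu : p ∩ z ∈ X := hInt p hpX z hz
  have hap : a ∈ p := mem_of_introduces ⟨⟨hpX, hprime⟩, y0, ⟨hy0X, hy0p, by assumption⟩, hdiff⟩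
  have hpu : p = y0 ∪ (p ∩ z) := by
    apply Set.Subset.antisymm
    · intro e he
      by_cases h : e ∈ y0
      · exact Or.inl h
      · have hea : e ∈ ({a} : Set E) := by rw [← hdiff]; exact ⟨he, h⟩
        have : e = a := hea
        subst this
        exact Or.inr ⟨he, haz⟩
    · exact Set.union_subset hy0p.subset Set.inter_subset_left
  set Y : Set (Set E) := {y0, p ∩ z} with hY
  have hYsub : Y ⊆ X := by rintro w (rfl | rfl); exacts [hy0X, hu]
  have hbnds : ∀ w ∈ Y, w ⊆ p := by
    rintro w (rfl | rfl); exacts [hy0p.subset, Set.inter_subset_left]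
  have hlubP : IsLubIn X Y p := by
    refine ⟨hpX, hbnds, fun t ht hb => ?_⟩
    rw [hpu]
    exact Set.union_subset (hb y0 (Or.inl rfl)) (hb (p ∩ z) (Or.inr rfl))
  have hpc : PairwiseConsistentIn X Y := by
    refine ⟨⟨y0, Or.inl rfl⟩, fun u hu v hv hne => ?_⟩
    refine ⟨p, hpX, ?_, ?_⟩
    · rintro w hw
      rcases hw with h | h
      · subst h; exact hbnds _ hu
      · subst h; exact hbnds _ hv
    · intro t ht hb
      have hut : u ⊆ t := hb u (Or.inl rfl)
      have hvt : v ⊆ t := hb v (Or.inr rfl)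
      rw [hpu]
      rcases hu with rfl | rfl <;> rcases hv with rfl | rfl
      · exact absurd rfl hne
      · exact Set.union_subset hut hvt
      · exact Set.union_subset hvt hut
      · exact absurd rfl hne
  obtain ⟨w, hw, hpw⟩ := hprime Y hYsub hpc p hlubP (subset_refl p)
  rcases hw with rfl | rfl
  · exact absurd hpw hy0p.not_subset
  · exact hpw.trans Set.inter_subset_right

/-- The symmetric residual is closed under binary intersections. -/
lemma symres_closedInter {E : Type*} {X : Set (Set E)} (hInt : ClosedInter X)
    (hCoh : CoherentCS X) {x : Set E} (hx : x ∈ X) :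
    ClosedInter (symres x X) := by
  rintro z1 ⟨y1, hy1, rfl⟩ z2 ⟨y2, hy2, rfl⟩
  refine ⟨(y1 ∩ y2) ∪ (x ∩ y1) ∪ (x ∩ y2), ?_, ?_⟩
  · apply hCoh _ (hInt _ hy1 _ hy2) _ (hInt _ hx _ hy1) _ (hInt _ hx _ hy2)
    · exact ⟨y1, hy1, Set.union_subset Set.inter_subset_left Set.inter_subset_right⟩
    · exact ⟨x, hx, Set.union_subset Set.inter_subset_left Set.inter_subset_left⟩
    · exact ⟨y2, hy2, Set.union_subset Set.inter_subset_right Set.inter_subset_right⟩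
  · ext e
    simp only [Set.mem_inter_iff, Set.mem_union, Set.mem_symmDiff]
    tauto

/-- The symmetric residual is closed under bounded binary unions. -/
lemma symres_boundedUnion {E : Type*} {X : Set (Set E)} (hInt : ClosedInter X)
    (hCoh : CoherentCS X) {x : Set E} :
    ∀ z1 ∈ symres x X, ∀ z2 ∈ symres x X, ∀ z3 ∈ symres x X,
      z1 ∪ z2 ⊆ z3 → z1 ∪ z2 ∈ symres x X := by
  rintro z1 ⟨y1, hy1, rfl⟩ z2 ⟨y2, hy2, rfl⟩ z3 ⟨y3, hy3, rfl⟩ hsub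
  refine ⟨(y1 ∩ y2) ∪ (y1 ∩ y3) ∪ (y2 ∩ y3), ?_, ?_⟩
  · apply hCoh _ (hInt _ hy1 _ hy2) _ (hInt _ hy1 _ hy3) _ (hInt _ hy2 _ hy3)
    · exact ⟨y1, hy1, Set.union_subset Set.inter_subset_left Set.inter_subset_left⟩
    · exact ⟨y3, hy3, Set.union_subset Set.inter_subset_right Set.inter_subset_right⟩
    · exact ⟨y2, hy2, Set.union_subset Set.inter_subset_right Set.inter_subset_left⟩
  · ext e
    have he := @hsub e
    simp only [Set.mem_inter_iff, Set.mem_union, Set.mem_symmDiff] at he ⊢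
    by_cases hex : e ∈ x <;> simp only [hex, and_true, and_false, not_true, not_false_iff,
      true_and, false_and, or_false, false_or] at he ⊢ <;> tauto

/-- The residuation map `σ_x` preserves orthogonality: for
    distinct complete primes `p, q` of a stable `C` that are orthogonal in `C`,
    their images under `σ_x` are orthogonal in `x⊙C`. -/
theorem residuation_preserves_orthogonality {E : Type*} [Countable E]
    (X : Set (Set E)) (hX : StableCS X) (x : Set E) (hx : x ∈ X) (hxfin : x.Finite)
    (p q : Set E) (hp : CompletePrimeIn X p) (hq : CompletePrimeIn X q)
    (hne : p ≠ q) (hort : Orthogonal X p q) :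
    ∀ p' q', SameIntro X (symres x X) p p' → SameIntro X (symres x X) q q' →
      Orthogonal (symres x X) p' q' := by
  intro p' q' hsp hsq
  obtain ⟨a, hpa, hpa'⟩ := hsp
  obtain ⟨b, hqb, hqb'⟩ := hsq
  obtain ⟨hroot, _, _, hInt, hCoh⟩ := hX
  obtain ⟨⟨s, hsX, hsub, _⟩, hnpq, hnqp⟩ := hort
  -- facts in X
  have hap : a ∈ p := mem_of_introduces hpa
  have hbq : b ∈ q := mem_of_introduces hqb
  have haq : a ∉ q := fun h => hnpq (prime_subset_of_mem hInt hpa q hq.1 h)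
  have hbp : b ∉ p := fun h => hnqp (prime_subset_of_mem hInt hqb p hp.1 h)
  have hps : p ⊆ s := hsub p (Or.inl rfl)
  have hqs : q ⊆ s := hsub q (Or.inr rfl)
  have has : a ∈ s := hps hap
  have hbs : b ∈ s := hqs hbq
  -- facts in the symmetric residual
  have hInt' : ClosedInter (symres x X) := symres_closedInter hInt hCoh hx
  have hap' : a ∈ p' := mem_of_introduces hpa'
  have hbq' : b ∈ q' := mem_of_introduces hqb'
  have hp'X : p' ∈ symres x X := hpa'.1.1
  have hq'X : q' ∈ symres x X := hqb'.1.1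
  have mema : ∀ z ∈ symres x X, a ∈ z → p' ⊆ z := prime_subset_of_mem hInt' hpa'
  have memb : ∀ z ∈ symres x X, b ∈ z → q' ⊆ z := prime_subset_of_mem hInt' hqb'
  have key : ∀ y ∈ X, symmDiff y x ∈ symres x X := fun y hy => ⟨y, hy, rfl⟩
  -- z1 : contains both a and b
  obtain ⟨z1, hz1, haz1, hbz1⟩ : ∃ z ∈ symres x X, a ∈ z ∧ b ∈ z := by
    by_cases hax : a ∈ x <;> by_cases hbx : b ∈ x
    · exact ⟨_, key ∅ hroot, Set.mem_symmDiff.mpr (Or.inr ⟨hax, fun h => h⟩),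
        Set.mem_symmDiff.mpr (Or.inr ⟨hbx, fun h => h⟩)⟩
    · exact ⟨_, key q hq.1, Set.mem_symmDiff.mpr (Or.inr ⟨hax, haq⟩),
        Set.mem_symmDiff.mpr (Or.inl ⟨hbq, hbx⟩)⟩
    · exact ⟨_, key p hp.1, Set.mem_symmDiff.mpr (Or.inl ⟨hap, hax⟩),
        Set.mem_symmDiff.mpr (Or.inr ⟨hbx, hbp⟩)⟩
    · exact ⟨_, key s hsX, Set.mem_symmDiff.mpr (Or.inl ⟨has, hax⟩),
        Set.mem_symmDiff.mpr (Or.inl ⟨hbs, hbx⟩)⟩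
  -- z2 : contains b but not a
  obtain ⟨z2, hz2, haz2, hbz2⟩ : ∃ z ∈ symres x X, a ∉ z ∧ b ∈ z := by
    by_cases hax : a ∈ x <;> by_cases hbx : b ∈ x
    · exact ⟨_, key p hp.1,
        fun h => (Set.mem_symmDiff.mp h).elim (fun h' => h'.2 hax) (fun h' => h'.2 hap),
        Set.mem_symmDiff.mpr (Or.inr ⟨hbx, hbp⟩)⟩
    · exact ⟨_, key s hsX,
        fun h => (Set.mem_symmDiff.mp h).elim (fun h' => h'.2 hax) (fun h' => h'.2 has),
        Set.mem_symmDiff.mpr (Or.inl ⟨hbs, hbx⟩)⟩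
    · exact ⟨_, key ∅ hroot,
        fun h => (Set.mem_symmDiff.mp h).elim (fun h' => h'.1) (fun h' => hax h'.1),
        Set.mem_symmDiff.mpr (Or.inr ⟨hbx, fun h => h⟩)⟩
    · exact ⟨_, key q hq.1,
        fun h => (Set.mem_symmDiff.mp h).elim (fun h' => haq h'.1) (fun h' => hax h'.1),
        Set.mem_symmDiff.mpr (Or.inl ⟨hbq, hbx⟩)⟩
  -- z3 : contains a but not b
  obtain ⟨z3, hz3, haz3, hbz3⟩ : ∃ z ∈ symres x X, a ∈ z ∧ b ∉ z := by
    by_cases hax : a ∈ x <;> by_cases hbx : b ∈ x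
    · exact ⟨_, key q hq.1, Set.mem_symmDiff.mpr (Or.inr ⟨hax, haq⟩),
        fun h => (Set.mem_symmDiff.mp h).elim (fun h' => h'.2 hbx) (fun h' => h'.2 hbq)⟩
    · exact ⟨_, key ∅ hroot, Set.mem_symmDiff.mpr (Or.inr ⟨hax, fun h => h⟩),
        fun h => (Set.mem_symmDiff.mp h).elim (fun h' => h'.1) (fun h' => hbx h'.1)⟩
    · exact ⟨_, key s hsX, Set.mem_symmDiff.mpr (Or.inl ⟨has, hax⟩),
        fun h => (Set.mem_symmDiff.mp h).elim (fun h' => h'.2 hbx) (fun h' => h'.2 hbs)⟩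
    · exact ⟨_, key p hp.1, Set.mem_symmDiff.mpr (Or.inl ⟨hap, hax⟩),
        fun h => (Set.mem_symmDiff.mp h).elim (fun h' => hbp h'.1) (fun h' => hbx h'.1)⟩
  -- assemble orthogonality
  have hp'z1 : p' ⊆ z1 := mema z1 hz1 haz1
  have hq'z1 : q' ⊆ z1 := memb z1 hz1 hbz1
  have hun : p' ∪ q' ∈ symres x X :=
    symres_boundedUnion hInt hCoh p' hp'X q' hq'X z1 hz1 (Set.union_subset hp'z1 hq'z1)
  refine ⟨⟨p' ∪ q', hun, ?_, ?_⟩, ?_, ?_⟩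
  · rintro w (rfl | rfl)
    · exact Set.subset_union_left
    · exact Set.subset_union_right
  · intro t ht hb
    exact Set.union_subset (hb p' (Or.inl rfl)) (hb q' (Or.inr rfl))
  · intro h
    exact haz2 (memb z2 hz2 hbz2 (h hap'))
  · intro h
    exact hbz3 (mema z3 hz3 haz3 (h hbq'))
end
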